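/- If αᵢ > 0 for all i, the (n+1)×(n+1) matrix M with first row (0, -α₁, …, -αₙ), entry M[1][0] = 1, M[i][i] = -1 for i = 1,…,n, M[i+1][i] = 1 for i = 1,…,n-1, and zeros elsewhere, is nonsingular; hence the leader-follower protocol with k_α = 1 has a unique equilibrium. -/

import Mathlib

/-!
Rows `1, …, n` of `M x = 0` say `z_{i-1} = z_i` (with `z₀ = ξ`), so a kernel vector is constant,
say `c`; the first row then reads `(∑ αᵢ) c = 0`, forcing `c = 0` because `∑ αᵢ > 0`.
-/

open Matrix

namespace Fin

theorem apply_eq_apply_zero_of_castSucc_eq_succ {n : ℕ} {β : Type*} {x : Fin (n + 1) → β}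
    (h : ∀ i : Fin n, x i.castSucc = x i.succ) (j : Fin (n + 1)) : x j = x 0 := by
  induction j using Fin.induction with
  | zero => rfl
  | succ i ih => rw [← h i, ih]

end Fin

section LeaderFollower

variable {R : Type*} [CommRing R] {n : ℕ}

/-- Row `0` is `(0, -α₁, …, -αₙ)` and row `i + 1` is `e_i - e_{i+1}`. -/
def leaderFollowerMatrix (α : Fin n → R) : Matrix (Fin (n + 1)) (Fin (n + 1)) R :=
  Matrix.of <| Fin.cons (Fin.cons 0 (-α)) fun i => Pi.single i.castSucc 1 - Pi.single i.succ 1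

variable (α : Fin n → R) (x : Fin (n + 1) → R)

theorem leaderFollowerMatrix_mulVec_zero :
    (leaderFollowerMatrix α *ᵥ x) 0 = -∑ i, α i * x i.succ := by
  simp [leaderFollowerMatrix, mulVec, dotProduct, Fin.sum_univ_succ]

theorem leaderFollowerMatrix_mulVec_succ (i : Fin n) :
    (leaderFollowerMatrix α *ᵥ x) i.succ = x i.castSucc - x i.succ := by
  change (Pi.single i.castSucc 1 - Pi.single i.succ 1) ⬝ᵥ x = _
  rw [sub_dotProduct, single_dotProduct, single_dotProduct, one_mul, one_mul]

theorem leaderFollowerMatrix_mulVec_eq_zero [IsDomain R] (hα : ∑ i, α i ≠ 0)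
    (hx : leaderFollowerMatrix α *ᵥ x = 0) : x = 0 := by
  have hconst : ∀ j, x j = x 0 := Fin.apply_eq_apply_zero_of_castSucc_eq_succ fun i =>
    sub_eq_zero.mp <| (leaderFollowerMatrix_mulVec_succ α x i).symm.trans (congrFun hx i.succ)
  have hrow : (∑ i, α i) * x 0 = 0 := by
    have h0 := congrFun hx 0
    rw [leaderFollowerMatrix_mulVec_zero, Pi.zero_apply, neg_eq_zero] at h0
    simpa only [Finset.sum_mul, hconst] using h0
  have hx0 : x 0 = 0 := (mul_eq_zero.mp hrow).resolve_left hα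
  funext j
  rw [hconst, hx0, Pi.zero_apply]

theorem leaderFollowerMatrix_det_ne_zero [IsDomain R] (hα : ∑ i, α i ≠ 0) :
    (leaderFollowerMatrix α).det ≠ 0 := fun h =>
  let ⟨v, hv, hMv⟩ := exists_mulVec_eq_zero_iff.mpr h
  hv (leaderFollowerMatrix_mulVec_eq_zero α v hα hMv)

end LeaderFollower

/-- The (n+1)×(n+1) system matrix M of the leader-follower protocol (k_α = 1),
with first row (0, -α₁, …, -αₙ), M[1][0] = 1, M[i][i] = -1 and M[i+1][i] = 1,
is nonsingular; hence the protocol has a unique equilibrium. -/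
theorem stmt10 (n : ℕ) (hn : 1 ≤ n)
    (α : Fin n → ℝ) (hα : ∀ i, 0 < α i)
    (M : Matrix (Fin (n + 1)) (Fin (n + 1)) ℝ)
    (hM : ∀ i j : Fin (n + 1), M i j =
      if hi : (i : ℕ) = 0 then
        (if hj : (j : ℕ) = 0 then 0 else -(α ⟨(j : ℕ) - 1, by omega⟩))
      else
        if (j : ℕ) = (i : ℕ) then -1
        else if (j : ℕ) + 1 = (i : ℕ) then 1 else 0) :
    M.det ≠ 0 ∧
      ∀ x y : Fin (n + 1) → ℝ, M.mulVec x = M.mulVec y → x = y := by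
  have hM_eq : M = leaderFollowerMatrix α := by
    ext i j
    rw [hM]
    induction i using Fin.cases <;> induction j using Fin.cases <;>
      simp [leaderFollowerMatrix, Pi.single_apply, Fin.ext_iff] <;>
      split_ifs <;> first | omega | norm_num
  have hsum : ∑ i, α i ≠ 0 :=
    (Finset.sum_pos (fun i _ => hα i) (Finset.univ_nonempty_iff.mpr ⟨⟨0, hn⟩⟩)).ne'
  have hdet : M.det ≠ 0 := hM_eq ▸ leaderFollowerMatrix_det_ne_zero α hsum
  exact ⟨hdet, fun x y h =>
    mulVec_injective_iff_isUnit.mpr ((isUnit_iff_isUnit_det M).mpr hdet.isUnit) h⟩
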